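/- arXiv:1008.3122 — 3 statements merged into one kernel-verified Lean document; each statement's English description precedes it below -/
import Mathlib

section
/- Let U be an m×m matrix of rational functions on C that is paraunitary, i.e., U(z) U*(z) = I_m wherever both are defined, where U*(z) = conj(U(1/conj(z)))^T. Suppose all entries of U have no poles in the closed unit disk, and all entries of U^{-1} also have no poles in the open unit disk. Then U is a constant unitary matrix. -/
/-!
On the unit circle `(conj z)⁻¹ = z`, so paraunitarity says `U(z) · U_*(z)ᵀ = 1` at infinitely
many points, where `f_*(z) = conj (f (1 / conj z))` is the para-conjugate; hence `U * U_*ᵀ = 1`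
as rational matrices and `U⁻¹ = U_*ᵀ`. An entry `f` of `U` has all its poles outside the closed
unit disc, so all poles of `f_*` lie in the open disc; but `f_*` is an entry of `U⁻¹`, which has no
poles there, so `f_*` is a polynomial. Its degree is minus the order of vanishing of `f` at `0`, so
`f_*` is a constant `c`, and then `f = conj c`.
-/

open Polynomial ComplexConjugate

namespace Polynomial

theorem Monic.eq_one_of_forall_eval_ne_zero {k : Type*} [Field k] [IsAlgClosed k] {p : k[X]}
    (hp : p.Monic) (h : ∀ z, p.eval z ≠ 0) : p = 1 := by
  refine eq_one_of_monic_natDegree_zero hp (natDegree_eq_zero_iff_degree_le_zero.2 ?_)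
  by_contra! hdeg
  obtain ⟨z, hz⟩ := IsAlgClosed.exists_root p hdeg.ne'
  exact h z hz

end Polynomial

namespace RatFunc

variable {K : Type*} [Field K]

theorem eval_id (f : RatFunc K) (z : K) :
    f.eval (RingHom.id K) z = f.num.eval z / f.denom.eval z :=
  rfl

theorem eval_algebraMap_div_algebraMap (p : K[X]) {q : K[X]} {z : K} (hq : q.eval z ≠ 0) :
    (algebraMap K[X] (RatFunc K) p / algebraMap K[X] (RatFunc K) q).eval (RingHom.id K) z =
      p.eval z / q.eval z := by
  set x := algebraMap K[X] (RatFunc K) p / algebraMap K[X] (RatFunc K) q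
  have hq0 : q ≠ 0 := by rintro rfl; simp at hq
  have hx : x.denom.eval z ≠ 0 := mt (eval_eq_zero_of_dvd_of_eval_eq_zero (denom_div_dvd p q)) hq
  have hcross : x.num * q = p * x.denom := (num_mul_eq_mul_denom_iff hq0).2 rfl
  rw [eval_id, div_eq_div_iff hx hq]
  simpa using congrArg (Polynomial.eval z) hcross

theorem eval_denom_mul_ne_zero {x y : RatFunc K} {z : K} (hx : x.denom.eval z ≠ 0)
    (hy : y.denom.eval z ≠ 0) : (x * y).denom.eval z ≠ 0 :=
  mt (eval_eq_zero_of_dvd_of_eval_eq_zero (denom_mul_dvd x y)) (by simpa using And.intro hx hy)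

theorem eval_denom_sum_ne_zero {ι : Type*} {s : Finset ι} {g : ι → RatFunc K} {z : K}
    (h : ∀ k ∈ s, (g k).denom.eval z ≠ 0) : (∑ k ∈ s, g k).denom.eval z ≠ 0 := by
  classical
  induction s using Finset.induction_on with
  | empty => simp
  | insert a s ha ih =>
    rw [Finset.sum_insert ha]
    refine mt (eval_eq_zero_of_dvd_of_eval_eq_zero (denom_add_dvd _ _)) ?_
    rw [Polynomial.eval_mul]
    exact mul_ne_zero (h a (s.mem_insert_self a))
      (ih fun k hk => h k (Finset.mem_insert_of_mem hk))

theorem eval_sum {ι : Type*} (s : Finset ι) {g : ι → RatFunc K} {z : K}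
    (h : ∀ k ∈ s, (g k).denom.eval z ≠ 0) :
    (∑ k ∈ s, g k).eval (RingHom.id K) z = ∑ k ∈ s, (g k).eval (RingHom.id K) z := by
  classical
  induction s using Finset.induction_on with
  | empty => simp
  | insert a s ha ih =>
    have hs : ∀ k ∈ s, (g k).denom.eval z ≠ 0 := fun k hk => h k (Finset.mem_insert_of_mem hk)
    rw [Finset.sum_insert ha, Finset.sum_insert ha,
      eval_add _ _ (h a (s.mem_insert_self a)) (eval_denom_sum_ne_zero hs), ih hs]

theorem eq_C_of_eval_eq {f : RatFunc K} {c : K} {S : Set K} (hS : S.Infinite)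
    (hden : ∀ z ∈ S, f.denom.eval z ≠ 0) (heval : ∀ z ∈ S, f.eval (RingHom.id K) z = c) :
    f = C c := by
  have hnum : f.num - Polynomial.C c * f.denom = 0 := by
    refine eq_zero_of_infinite_isRoot _ (hS.mono fun z hz => ?_)
    have := heval z hz
    rw [eval_id, div_eq_iff (hden z hz)] at this
    simpa [sub_eq_zero] using this
  rw [← num_div_denom f, sub_eq_zero.1 hnum, map_mul, mul_div_assoc,
    div_self (algebraMap_ne_zero f.denom_ne_zero), mul_one, algebraMap_C]

end RatFunc

theorem Complex.infinite_sphere_zero_one : (Metric.sphere (0 : ℂ) 1).Infinite :=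
  (isPreconnected_sphere (by simp [Complex.rank_real_complex]) 0 1).infinite_of_nontrivial
    ⟨1, by simp, -1, by simp, by norm_num⟩

theorem Complex.inv_conj_eq_self {z : ℂ} (hz : ‖z‖ = 1) : (conj z)⁻¹ = z := by
  rw [Complex.inv_eq_conj (by rwa [Complex.norm_conj]), Complex.conj_conj]

namespace Polynomial

noncomputable def conjReverse (p : ℂ[X]) : ℂ[X] :=
  (p.map (starRingEnd ℂ)).reverse

theorem eval_conjReverse (p : ℂ[X]) {z : ℂ} (hz : z ≠ 0) :
    (conjReverse p).eval z = z ^ p.natDegree * conj (p.eval (conj z)⁻¹) := by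
  let : Invertible z⁻¹ := invertibleOfNonzero (inv_ne_zero hz)
  have hmap : (p.map (starRingEnd ℂ)).eval z⁻¹ = conj (p.eval (conj z)⁻¹) := by
    rw [eval_map, show z⁻¹ = conj (conj z)⁻¹ by simp, eval₂_at_apply]
  have h : (conjReverse p).eval z * z⁻¹ ^ p.natDegree = conj (p.eval (conj z)⁻¹) := by
    simpa [conjReverse, natDegree_map_eq_of_injective (starRingEnd ℂ).injective] using
      (eval₂_reverse_mul_pow (RingHom.id ℂ) z⁻¹ (p.map (starRingEnd ℂ))).trans hmap
  rw [← h, mul_left_comm, ← mul_pow, mul_inv_cancel₀ hz, one_pow, mul_one]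

theorem conjReverse_ne_zero {p : ℂ[X]} (hp : p ≠ 0) : conjReverse p ≠ 0 := by
  simpa [conjReverse] using hp

theorem natDegree_conjReverse_le (p : ℂ[X]) : (conjReverse p).natDegree ≤ p.natDegree :=
  (reverse_natDegree_le _).trans natDegree_map_le

theorem natDegree_conjReverse {p : ℂ[X]} (hp : p.eval 0 ≠ 0) :
    (conjReverse p).natDegree = p.natDegree := by
  have : (p.map (starRingEnd ℂ)).natTrailingDegree = 0 :=
    natTrailingDegree_eq_zero.2 (Or.inr (by simpa [coeff_zero_eq_eval_zero] using hp))
  rw [conjReverse, reverse_natDegree, this, Nat.sub_zero,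
    natDegree_map_eq_of_injective (starRingEnd ℂ).injective]

end Polynomial

namespace RatFunc

/-- The para-conjugate `f_*(z) = conj (f (1 / conj z))`. -/
noncomputable def paraConj (f : RatFunc ℂ) : RatFunc ℂ :=
  algebraMap ℂ[X] (RatFunc ℂ) (conjReverse f.num * Polynomial.X ^ f.denom.natDegree) /
    algebraMap ℂ[X] (RatFunc ℂ) (conjReverse f.denom * Polynomial.X ^ f.num.natDegree)

theorem eval_conjReverse_denom_mul_X_pow (f : RatFunc ℂ) {z : ℂ} (hz : z ≠ 0) :
    (conjReverse f.denom * Polynomial.X ^ f.num.natDegree).eval z =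
      z ^ (f.denom.natDegree + f.num.natDegree) * conj (f.denom.eval (conj z)⁻¹) := by
  rw [Polynomial.eval_mul, eval_pow, Polynomial.eval_X, eval_conjReverse _ hz, pow_add]
  ring

theorem eval_denom_paraConj_ne_zero (f : RatFunc ℂ) {z : ℂ} (hz : z ≠ 0)
    (hf : f.denom.eval (conj z)⁻¹ ≠ 0) : (paraConj f).denom.eval z ≠ 0 := by
  refine mt (eval_eq_zero_of_dvd_of_eval_eq_zero (denom_div_dvd _ _)) ?_
  rw [eval_conjReverse_denom_mul_X_pow f hz]
  exact mul_ne_zero (pow_ne_zero _ hz) (by simpa using hf)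

theorem eval_paraConj (f : RatFunc ℂ) {z : ℂ} (hz : z ≠ 0) (hf : f.denom.eval (conj z)⁻¹ ≠ 0) :
    (paraConj f).eval (RingHom.id ℂ) z = conj (f.eval (RingHom.id ℂ) (conj z)⁻¹) := by
  have hB : (conjReverse f.denom * Polynomial.X ^ f.num.natDegree).eval z ≠ 0 := by
    rw [eval_conjReverse_denom_mul_X_pow f hz]
    exact mul_ne_zero (pow_ne_zero _ hz) (by simpa using hf)
  rw [paraConj, eval_algebraMap_div_algebraMap _ hB, eval_conjReverse_denom_mul_X_pow f hz,
    Polynomial.eval_mul, eval_pow, Polynomial.eval_X, eval_conjReverse _ hz, eval_id, map_div₀]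
  have := pow_ne_zero (f.denom.natDegree + f.num.natDegree) hz
  field_simp
  ring

theorem norm_lt_one_of_eval_denom_paraConj_eq_zero {f : RatFunc ℂ}
    (hf : ∀ z : ℂ, ‖z‖ ≤ 1 → f.denom.eval z ≠ 0) {z : ℂ} (hz : (paraConj f).denom.eval z = 0) :
    ‖z‖ < 1 := by
  rcases eq_or_ne z 0 with rfl | hz0
  · simp
  by_contra! h
  refine eval_denom_paraConj_ne_zero f hz0 (hf _ ?_) hz
  rw [norm_inv, Complex.norm_conj]
  exact inv_le_one_of_one_le₀ h

theorem exists_eq_C_of_forall_eval_denom_paraConj_ne_zero {f : RatFunc ℂ}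
    (hf : ∀ z : ℂ, ‖z‖ ≤ 1 → f.denom.eval z ≠ 0)
    (hg : ∀ z : ℂ, ‖z‖ < 1 → (paraConj f).denom.eval z ≠ 0) : ∃ c, f = C c := by
  have hden : (paraConj f).denom = 1 :=
    (monic_denom _).eq_one_of_forall_eval_ne_zero fun z hz =>
      hg z (norm_lt_one_of_eval_denom_paraConj_eq_zero hf hz) hz
  set q := (paraConj f).num
  have hq : algebraMap ℂ[X] (RatFunc ℂ) q = paraConj f := by
    rw [← num_div_denom (paraConj f), hden, map_one, div_one]
  have hB0 : conjReverse f.denom * Polynomial.X ^ f.num.natDegree ≠ 0 :=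
    mul_ne_zero (conjReverse_ne_zero f.denom_ne_zero) (pow_ne_zero _ Polynomial.X_ne_zero)
  have hqB : q * (conjReverse f.denom * Polynomial.X ^ f.num.natDegree) =
      conjReverse f.num * Polynomial.X ^ f.denom.natDegree := by
    apply algebraMap_injective ℂ
    rw [map_mul, hq, paraConj, div_mul_cancel₀ _ (algebraMap_ne_zero hB0)]
  have hq_natDegree : q.natDegree = 0 := by
    rcases eq_or_ne q 0 with hq0 | hq0
    · simp [hq0]
    have hdeg := congrArg natDegree hqB
    rw [natDegree_mul hq0 hB0, natDegree_mul (conjReverse_ne_zero f.denom_ne_zero)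
      (pow_ne_zero _ Polynomial.X_ne_zero), natDegree_X_pow,
      natDegree_conjReverse (hf 0 (by simp))] at hdeg
    have := natDegree_mul_le (p := conjReverse f.num) (q := Polynomial.X ^ f.denom.natDegree)
    rw [natDegree_X_pow] at this
    have := natDegree_conjReverse_le f.num
    omega
  refine ⟨conj (q.coeff 0), eq_C_of_eval_eq Complex.infinite_sphere_zero_one
    (fun z hz => hf z (mem_sphere_zero_iff_norm.1 hz).le) fun z hz => ?_⟩
  have hz : ‖z‖ = 1 := mem_sphere_zero_iff_norm.1 hz
  have hz0 : z ≠ 0 := by rintro rfl; simp at hz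
  have h := eval_paraConj f hz0 (by rw [Complex.inv_conj_eq_self hz]; exact hf z hz.le)
  rw [← hq, eq_C_of_natDegree_eq_zero hq_natDegree, algebraMap_C, eval_C,
    Complex.inv_conj_eq_self hz, RingHom.id_apply] at h
  rw [h, Complex.conj_conj]

end RatFunc

open Matrix ComplexOrder

theorem Matrix.mul_transpose_map_paraConj_eq_one {n : Type*} [Fintype n] [DecidableEq n]
    (U : Matrix n n (RatFunc ℂ)) (hU : ∀ i j (z : ℂ), ‖z‖ = 1 → (U i j).denom.eval z ≠ 0)
    (hunit : ∀ z : ℂ, ‖z‖ = 1 →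
      U.map (RatFunc.eval (RingHom.id ℂ) z) * (U.map (RatFunc.eval (RingHom.id ℂ) z))ᴴ = 1) :
    U * (U.map RatFunc.paraConj)ᵀ = 1 := by
  ext i j
  rw [← Matrix.map_one RatFunc.C (map_zero _) (map_one _), Matrix.map_apply, mul_apply]
  simp only [transpose_apply, map_apply]
  have hne : ∀ z : ℂ, ‖z‖ = 1 → z ≠ 0 := fun z hz => norm_ne_zero_iff.1 (by simp [hz])
  have hconj : ∀ z : ℂ, ‖z‖ = 1 → ∀ k, (U j k).denom.eval (conj z)⁻¹ ≠ 0 := fun z hz k => by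
    rw [Complex.inv_conj_eq_self hz]
    exact hU j k z hz
  have hterm : ∀ z : ℂ, ‖z‖ = 1 → ∀ k, (U i k * (U j k).paraConj).denom.eval z ≠ 0 :=
    fun z hz k => RatFunc.eval_denom_mul_ne_zero (hU i k z hz)
      (RatFunc.eval_denom_paraConj_ne_zero _ (hne z hz) (hconj z hz k))
  refine RatFunc.eq_C_of_eval_eq Complex.infinite_sphere_zero_one
    (fun z hz => RatFunc.eval_denom_sum_ne_zero fun k _ => hterm z (by simpa using hz) k)
    fun z hz => ?_
  rw [mem_sphere_zero_iff_norm] at hz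
  rw [RatFunc.eval_sum _ fun k _ => hterm z hz k, ← congrFun (congrFun (hunit z hz) i) j, mul_apply]
  refine Finset.sum_congr rfl fun k _ => ?_
  rw [RatFunc.eval_mul _ _ (hU i k z hz)
      (RatFunc.eval_denom_paraConj_ne_zero _ (hne z hz) (hconj z hz k)),
    RatFunc.eval_paraConj _ (hne z hz) (hconj z hz k),
    Complex.inv_conj_eq_self hz]
  rfl

/-- A rational paraunitary matrix function `U` such that `U` has no poles in the closed unit
disk and `U⁻¹` has no poles in the open unit disk is a constant unitary matrix. -/
theorem stmt6 {m : ℕ} (U : Matrix (Fin m) (Fin m) (RatFunc ℂ))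
    (hpara : ∀ z : ℂ, z ≠ 0 →
      (∀ i j, Polynomial.eval z (U i j).denom ≠ 0) →
      (∀ i j, Polynomial.eval ((starRingEnd ℂ) z)⁻¹ (U i j).denom ≠ 0) →
      (Matrix.of fun i j => (U i j).eval (RingHom.id ℂ) z) *
        (Matrix.of fun i j => (U i j).eval (RingHom.id ℂ) ((starRingEnd ℂ) z)⁻¹)ᴴ = 1)
    (hU : ∀ i j, ∀ z : ℂ, ‖z‖ ≤ 1 → Polynomial.eval z (U i j).denom ≠ 0)
    (hUinv : ∀ i j, ∀ z : ℂ, ‖z‖ < 1 → Polynomial.eval z (U⁻¹ i j).denom ≠ 0) :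
    ∃ V : Matrix (Fin m) (Fin m) ℂ, V * Vᴴ = 1 ∧ ∀ i j, U i j = RatFunc.C (V i j) := by
  have hunit : ∀ z : ℂ, ‖z‖ = 1 →
      U.map (RatFunc.eval (RingHom.id ℂ) z) * (U.map (RatFunc.eval (RingHom.id ℂ) z))ᴴ = 1 := by
    intro z hz
    have h := hpara z (norm_ne_zero_iff.1 (by simp [hz])) (fun i j => hU i j z hz.le)
      (fun i j => by rw [Complex.inv_conj_eq_self hz]; exact hU i j z hz.le)
    rwa [Complex.inv_conj_eq_self hz] at h
  have hinv : U⁻¹ = (U.map RatFunc.paraConj)ᵀ :=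
    inv_eq_right_inv (U.mul_transpose_map_paraConj_eq_one (fun i j z hz => hU i j z hz.le) hunit)
  choose c hc using fun i j =>
    RatFunc.exists_eq_C_of_forall_eval_denom_paraConj_ne_zero (hU i j) fun z hz => by
      simpa [hinv] using hUinv j i z hz
  refine ⟨of c, ?_, hc⟩
  have hU1 : U.map (RatFunc.eval (RingHom.id ℂ) 1) = of c := by
    ext i j
    simp [hc]
  simpa [hU1] using hunit 1 (by simp)
end

section
/- Let S be an m×m Hermitian nonnegative definite matrix of rank k whose upper-left k×k block S_00 is positive definite, and write S_00 = A A* for an invertible k×k matrix A. Define the m×k matrix S_0 with blocks A (top) and S_10 A^{-*} (bottom), where S_10 is the lower-left block of S and A^{-*} = (A*)^{-1}. Then S = S_0 S_0*. -/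
/-!
Hermitian-ness gives `S₀₁ = S₁₀ᴴ`. The rank condition forces the Schur complement
`S₁₁ - S₁₀ S₀₀⁻¹ S₀₁` to vanish: a nonzero entry in position `(i, j)` would make the minor of `S`
bordering `S₀₀` by row `i` and column `j` invertible, of size `k + 1`. With `S₀₀ = A Aᴴ` the product
`S₀ S₀ᴴ` then reproduces `S` block by block.
-/

open Matrix ComplexOrder

namespace Matrix

theorem fromBlocks_submatrix_sum_map {m n R : Type*} (A : Matrix m m R) (B : Matrix m n R)
    (C : Matrix n m R) (D : Matrix n n R) (i j : n) :
    (fromBlocks A B C D).submatrix (Sum.map id fun _ : Unit => i) (Sum.map id fun _ : Unit => j) =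
      fromBlocks A (B.submatrix id fun _ => j) (C.submatrix (fun _ => i) id) (of fun _ _ => D i j) := by
  ext (a | a) (b | b) <;> rfl

variable {m n : Type*} [Fintype m] [DecidableEq m]

theorem schur_complement_eq_zero_of_rank_fromBlocks_le [Fintype n] {K : Type*} [Field K]
    {A : Matrix m m K} (hA : IsUnit A.det) (B : Matrix m n K) (C : Matrix n m K) (D : Matrix n n K)
    (hrank : (fromBlocks A B C D).rank ≤ Fintype.card m) : D - C * A⁻¹ * B = 0 := by
  let := A.invertibleOfIsUnitDet hA
  ext i j
  by_contra hij
  have hdet : IsUnit ((fromBlocks A B C D).submatrix (Sum.map id fun _ : Unit => i)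
      (Sum.map id fun _ => j)).det := by
    rw [fromBlocks_submatrix_sum_map, det_fromBlocks₁₁, det_unique (_ - _)]
    refine hA.mul (isUnit_iff_ne_zero.mpr ?_)
    simpa [invOf_eq_nonsing_inv, Matrix.mul_apply] using hij
  have hle := (rank_of_isUnit _ ((isUnit_iff_isUnit_det _).mpr hdet)).symm.trans_le
    (rank_submatrix_le _ _ _)
  simp only [Fintype.card_sum, Fintype.card_unit] at hle
  omega

theorem fromBlocks_eq_fromRows_mul_conjTranspose {R : Type*} [CommRing R] [StarRing R]
    {A : Matrix m m R} (hA : IsUnit A.det) (C : Matrix n m R) :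
    fromBlocks (A * Aᴴ) Cᴴ C (C * (A * Aᴴ)⁻¹ * Cᴴ) =
      fromRows A (C * Aᴴ⁻¹) * (fromRows A (C * Aᴴ⁻¹))ᴴ := by
  have hAH : IsUnit Aᴴ.det := by rwa [det_conjTranspose, isUnit_star]
  have hCH : (C * Aᴴ⁻¹)ᴴ = A⁻¹ * Cᴴ := by
    rw [conjTranspose_mul, ← conjTranspose_nonsing_inv, conjTranspose_conjTranspose]
  rw [conjTranspose_fromRows_eq_fromCols_conjTranspose, fromRows_mul_fromCols, hCH,
    ← Matrix.mul_assoc, mul_nonsing_inv A hA, Matrix.one_mul, Matrix.mul_assoc C Aᴴ⁻¹,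
    nonsing_inv_mul _ hAH, Matrix.mul_one, mul_inv_rev]
  simp only [Matrix.mul_assoc]

end Matrix

theorem stmt12_general {k l : ℕ}
    (S00 : Matrix (Fin k) (Fin k) ℂ) (S01 : Matrix (Fin k) (Fin l) ℂ)
    (S10 : Matrix (Fin l) (Fin k) ℂ) (S11 : Matrix (Fin l) (Fin l) ℂ)
    (A : Matrix (Fin k) (Fin k) ℂ)
    (hS : (Matrix.fromBlocks S00 S01 S10 S11).PosSemidef)
    (hrank : (Matrix.fromBlocks S00 S01 S10 S11).rank = k)
    (hA : IsUnit A.det) (hfac : S00 = A * Aᴴ) :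
    Matrix.fromBlocks S00 S01 S10 S11 =
      (Matrix.of fun i j => Sum.elim (fun i' => A i' j) (fun i' => (S10 * (Aᴴ)⁻¹) i' j) i :
        Matrix (Fin k ⊕ Fin l) (Fin k) ℂ) *
      (Matrix.of fun i j => Sum.elim (fun i' => A i' j) (fun i' => (S10 * (Aᴴ)⁻¹) i' j) i :
        Matrix (Fin k ⊕ Fin l) (Fin k) ℂ)ᴴ := by
  have hS00 : IsUnit S00.det := by
    rw [hfac, det_mul, det_conjTranspose]
    exact hA.mul hA.star
  have hS11 : S11 = S10 * S00⁻¹ * S01 := sub_eq_zero.mp <|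
    schur_complement_eq_zero_of_rank_fromBlocks_le hS00 S01 S10 S11 (by simp [hrank])
  obtain ⟨-, -, hS01, -⟩ := isHermitian_fromBlocks_iff.mp hS.isHermitian
  have hS0 : (of fun i j => Sum.elim (fun i' => A i' j) (fun i' => (S10 * (Aᴴ)⁻¹) i' j) i :
      Matrix (Fin k ⊕ Fin l) (Fin k) ℂ) = fromRows A (S10 * Aᴴ⁻¹) := by
    ext (i | i) j <;> rfl
  subst hS01 hS11 hfac
  rw [hS0]
  exact fromBlocks_eq_fromRows_mul_conjTranspose hA S10

/-- If `S = [[S₀₀, S₀₁], [S₁₀, S₁₁]]` is Hermitian nonnegative definite of rank `k`, with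
`S₀₀` positive definite of size `k × k` and `S₀₀ = A A*` for an invertible `A`, then the
`m × k` matrix `S₀` with blocks `A` and `S₁₀ (A*)⁻¹` satisfies `S = S₀ S₀*`. -/
theorem stmt12 {k l : ℕ}
    (S00 : Matrix (Fin k) (Fin k) ℂ) (S01 : Matrix (Fin k) (Fin l) ℂ)
    (S10 : Matrix (Fin l) (Fin k) ℂ) (S11 : Matrix (Fin l) (Fin l) ℂ)
    (A : Matrix (Fin k) (Fin k) ℂ)
    (hS : (Matrix.fromBlocks S00 S01 S10 S11).PosSemidef)
    (hrank : (Matrix.fromBlocks S00 S01 S10 S11).rank = k)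
    (hpd : S00.PosDef) (hA : IsUnit A.det) (hfac : S00 = A * Aᴴ) :
    Matrix.fromBlocks S00 S01 S10 S11 =
      (Matrix.of fun i j => Sum.elim (fun i' => A i' j) (fun i' => (S10 * (Aᴴ)⁻¹) i' j) i :
        Matrix (Fin k ⊕ Fin l) (Fin k) ℂ) *
      (Matrix.of fun i j => Sum.elim (fun i' => A i' j) (fun i' => (S10 * (Aᴴ)⁻¹) i' j) i :
        Matrix (Fin k ⊕ Fin l) (Fin k) ℂ)ᴴ :=
  stmt12_general S00 S01 S10 S11 A hS hrank hA hfac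
end

section
/- Let S(z) = sum_{n=-N}^N C_n z^n be an m×m Laurent matrix polynomial, nonnegative definite of rank k ≤ m for almost all z on the unit circle, and suppose S(z) = S^+(z) S^-(z) where S^+ is an m×k rational matrix function analytic and of full rank k in the open unit disk and S^- = (S^+)*. Then S^+ is a matrix polynomial of degree at most N. -/
/-!
On the unit circle `1 / z̄ = z`, so there the factorization reads `S = P Pᴴ` and each entry of `P`
is bounded by a diagonal entry of the continuous `S`: `P` has no pole on the circle. Inside the
disk `P` has full column rank, so `(Pᴴ P)⁻¹ Pᴴ` is a continuous left inverse of `P` near every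
`w` with `|w| < 1`, and `P(1 / z̄)ᴴ = (Pᴴ P)⁻¹ Pᴴ S` stays bounded as `z → w ≠ 0`: `P` has no
pole at `1 / w̄` either. So the entries of `P` are polynomials, and at `w = 0` the same identity
together with `S(z) = O(|z|⁻ᴺ)` gives `P(ζ) = O(|ζ|ᴺ)` as `ζ → ∞`.
-/

open Matrix ComplexOrder MeasureTheory

open Filter Topology Asymptotics Bornology Polynomial ComplexConjugate

namespace RatFunc

variable {K : Type*} [NormedField K]

lemma continuousAt_eval (q : RatFunc K) {z₀ : K} (h : q.denom.eval z₀ ≠ 0) :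
    ContinuousAt (fun z => q.eval (RingHom.id K) z) z₀ :=
  q.num.continuousAt.div q.denom.continuousAt h

lemma eventually_denom_eval_ne_zero (q : RatFunc K) (z₀ : K) :
    ∀ᶠ z in 𝓝[≠] z₀, q.denom.eval z ≠ 0 :=
  (eventually_cofinite_not_isRoot q.denom_ne_zero).filter_mono (nhdsNE_le_cofinite z₀)

lemma num_eval_ne_zero_of_denom_eval_eq_zero (q : RatFunc K) {z₀ : K}
    (h : q.denom.eval z₀ = 0) : q.num.eval z₀ ≠ 0 := by
  obtain ⟨a, b, hab⟩ := q.isCoprime_num_denom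
  intro h'
  simpa [h, h'] using congrArg (Polynomial.eval z₀) hab

lemma tendsto_norm_eval_nhdsNE_atTop (q : RatFunc K) {z₀ : K} (h : q.denom.eval z₀ = 0) :
    Tendsto (fun z => ‖q.eval (RingHom.id K) z‖) (𝓝[≠] z₀) atTop := by
  have hnum : Tendsto (fun z => ‖q.num.eval z‖) (𝓝[≠] z₀) (𝓝 ‖q.num.eval z₀‖) :=
    q.num.continuousAt.norm.tendsto.mono_left nhdsWithin_le_nhds
  have hdenom : Tendsto (fun z => ‖q.denom.eval z‖) (𝓝[≠] z₀) (𝓝[>] 0) := by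
    refine tendsto_nhdsWithin_iff.2 ⟨?_, ?_⟩
    · have := (q.denom.continuousAt (a := z₀)).norm.tendsto.mono_left
        (nhdsWithin_le_nhds (s := {z₀}ᶜ))
      rwa [h, norm_zero] at this
    · filter_upwards [q.eventually_denom_eval_ne_zero z₀] with z hz using norm_pos_iff.2 hz
  simpa [eval, div_eq_mul_inv] using
    hnum.pos_mul_atTop (norm_pos_iff.2 (q.num_eval_ne_zero_of_denom_eval_eq_zero h))
      hdenom.inv_tendsto_nhdsGT_zero

lemma denom_eval_ne_zero_of_isBoundedUnder {α : Type*} {l : Filter α} [l.NeBot] (q : RatFunc K)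
    {z₀ : K} {w : α → K} (hw : Tendsto w l (𝓝[≠] z₀))
    (hb : IsBoundedUnder (· ≤ ·) l fun t => ‖q.eval (RingHom.id K) (w t)‖) :
    q.denom.eval z₀ ≠ 0 := fun h =>
  not_isBoundedUnder_of_tendsto_atTop ((q.tendsto_norm_eval_nhdsNE_atTop h).comp hw) hb

lemma denom_eq_one_of_forall_eval_ne_zero {F : Type*} [Field F] [IsAlgClosed F] (q : RatFunc F)
    (h : ∀ z, q.denom.eval z ≠ 0) : q.denom = 1 := by
  refine q.monic_denom.natDegree_eq_zero.1 (natDegree_eq_of_degree_eq_some ?_)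
  by_contra hdeg
  obtain ⟨z, hz⟩ := IsAlgClosed.exists_root _ hdeg
  exact h z hz

lemma eq_algebraMap_num_of_denom_eq_one {F : Type*} [Field F] (q : RatFunc F) (h : q.denom = 1) :
    q = algebraMap F[X] (RatFunc F) q.num := by
  simpa [h] using q.num_div_denom.symm

end RatFunc

namespace Polynomial

variable {K : Type*} [NontriviallyNormedField K]

lemma natDegree_le_of_isBigO_cobounded {p : K[X]} {N : ℕ} (h : p.eval =O[cobounded K] (· ^ N)) :
    p.natDegree ≤ N := by
  by_contra! hN
  have hp : p ≠ 0 := by rintro rfl; simp at hN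
  have hlead : (fun z => p.leadingCoeff * z ^ p.natDegree) =o[cobounded K] (· ^ p.natDegree) :=
    isEquivalent_cobounded_leading_monomial.symm.isBigO.trans_isLittleO
      (h.trans_isLittleO (isLittleO_pow_pow_cobounded_of_lt hN))
  rw [isLittleO_const_mul_left_iff (leadingCoeff_ne_zero.2 hp)] at hlead
  refine isLittleO_irrefl ?_ hlead
  exact ((eventually_ne_cobounded 0).mono fun z hz => pow_ne_zero _ hz).frequently

end Polynomial

namespace Matrix

variable {ι κ : Type*} [Fintype κ]

lemma isUnit_of_rank_eq_card [DecidableEq κ] {K : Type*} [Field K] {A : Matrix κ κ K}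
    (h : A.rank = Fintype.card κ) : IsUnit A := by
  refine mulVec_surjective_iff_isUnit.1 fun v => ?_
  have hrange : LinearMap.range A.mulVecLin = ⊤ :=
    Submodule.eq_top_of_finrank_eq (by rw [← Matrix.rank, h, Module.finrank_fintype_fun_eq_card])
  exact LinearMap.range_eq_top.1 hrange v

lemma exists_continuousAt_leftInverse [Fintype ι] [DecidableEq κ] {X 𝕜 : Type*}
    [TopologicalSpace X] [RCLike 𝕜] {A : X → Matrix ι κ 𝕜} {x₀ : X}
    (hA : ContinuousAt A x₀) (hrank : (A x₀).rank = Fintype.card κ) :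
    ∃ B : X → Matrix κ ι 𝕜, ContinuousAt B x₀ ∧ ∀ᶠ x in 𝓝 x₀, B x * A x = 1 := by
  set G : X → Matrix κ κ 𝕜 := fun x => (A x)ᴴ * A x
  have hG : ContinuousAt G x₀ :=
    (continuous_id.matrix_conjTranspose.matrix_mul continuous_id).continuousAt.comp hA
  have hG₀ : IsUnit (G x₀).det := (isUnit_iff_isUnit_det _).1 <|
    isUnit_of_rank_eq_card (by rw [rank_conjTranspose_mul_self, hrank])
  refine ⟨fun x => (G x)⁻¹ * (A x)ᴴ, ?_, ?_⟩
  · have hinv : ContinuousAt (fun x => (G x)⁻¹) x₀ :=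
      (continuousAt_matrix_inv _ (NormedRing.inverse_continuousAt hG₀.unit)).comp hG
    fun_prop
  · filter_upwards [(continuous_id.matrix_det.continuousAt.comp hG).eventually_ne hG₀.ne_zero]
      with x hx
    rw [Matrix.mul_assoc]
    exact nonsing_inv_mul _ (Ne.isUnit hx)

lemma norm_sq_le_norm_mul_conjTranspose_apply_self {𝕜 : Type*} [RCLike 𝕜] (X : Matrix ι κ 𝕜)
    (i : ι) (j : κ) : ‖X i j‖ ^ 2 ≤ ‖(X * Xᴴ) i i‖ := by
  have hdiag : (X * Xᴴ) i i = ((∑ j, ‖X i j‖ ^ 2 : ℝ) : 𝕜) := by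
    simp [mul_apply, RCLike.mul_conj]
  rw [hdiag, RCLike.norm_ofReal, abs_of_nonneg (by positivity)]
  exact Finset.single_le_sum (f := fun j => ‖X i j‖ ^ 2) (fun _ _ => by positivity)
    (Finset.mem_univ j)

end Matrix

section Laurent

variable {K E : Type*} [NontriviallyNormedField K]

lemma continuousAt_of_eq_laurent [TopologicalSpace E] [AddCommMonoid E] [ContinuousAdd E]
    [Module K E] [ContinuousSMul K E] {S : K → E} {c : ℤ → E} {s : Finset ℤ}
    (hS : ∀ z, z ≠ 0 → S z = ∑ n ∈ s, z ^ n • c n) {z₀ : K} (hz₀ : z₀ ≠ 0) :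
    ContinuousAt S z₀ := by
  have hsum : ContinuousAt (fun z => ∑ n ∈ s, z ^ n • c n) z₀ := by
    fun_prop (disch := exact Or.inl hz₀)
  exact hsum.congr_of_eventuallyEq ((eventually_ne_nhds hz₀).mono hS)

lemma isBigO_laurent_nhdsNE_zero [NormedAddCommGroup E] [NormedSpace K E] (c : ℤ → E) (N : ℕ) :
    (fun z : K => ∑ n ∈ Finset.Icc (-(N : ℤ)) N, z ^ n • c n) =O[𝓝[≠] 0] fun z => z⁻¹ ^ N := by
  refine IsBigO.fun_sum fun n hn => IsBigO.of_bound ‖c n‖ ?_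
  have hball : ∀ᶠ z in 𝓝[≠] (0 : K), ‖z‖ ≤ 1 :=
    nhdsWithin_le_nhds <| Filter.mem_of_superset (Metric.closedBall_mem_nhds 0 one_pos)
      fun z hz => mem_closedBall_zero_iff.1 hz
  filter_upwards [hball, self_mem_nhdsWithin] with z hz hz0
  rw [norm_smul, norm_zpow, norm_pow, norm_inv, mul_comm, inv_pow, ← zpow_natCast,
    ← _root_.zpow_neg]
  exact mul_le_mul_of_nonneg_left
    (zpow_le_zpow_right_of_le_one₀ (norm_pos_iff.2 hz0) hz (Finset.mem_Icc.1 hn).1) (norm_nonneg _)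

end Laurent

namespace Complex

lemma tendsto_inv_conj_nhdsNE {w : ℂ} (hw : w ≠ 0) :
    Tendsto (fun z => (conj z)⁻¹) (𝓝[≠] w) (𝓝[≠] (conj w)⁻¹) := by
  refine tendsto_nhdsWithin_iff.2 ⟨?_, eventually_nhdsWithin_of_forall fun z hz => ?_⟩
  · exact (continuous_conj.continuousAt.inv₀ (by simpa using hw)).tendsto.mono_left
      nhdsWithin_le_nhds
  · exact fun h => hz (by simpa using congrArg (fun u => conj u⁻¹) h)

lemma tendsto_inv_conj_cobounded : Tendsto (fun z : ℂ => (conj z)⁻¹) (cobounded ℂ) (𝓝[≠] 0) :=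
  tendsto_inv₀_cobounded'.comp <| tendsto_norm_atTop_iff_cobounded.1 <| by
    simpa using tendsto_norm_cobounded_atTop

end Complex

namespace Matrix

variable {m n : Type*}

/-- At a pole of an entry, `RatFunc.eval` returns the junk value `num / 0 = 0`. -/
noncomputable def evalAt (P : Matrix m n (RatFunc ℂ)) (z : ℂ) : Matrix m n ℂ :=
  P.map (RatFunc.eval (RingHom.id ℂ) z)

def IsRegularAt (P : Matrix m n (RatFunc ℂ)) (z : ℂ) : Prop :=
  ∀ i j, (P i j).denom.eval z ≠ 0

/-- `S = S⁺ S⁻` with `S⁻(z) = S⁺(1 / z̄)ᴴ`, wherever the right-hand side is defined. -/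
def IsFactorization [Fintype n] (S : ℂ → Matrix m m ℂ) (P : Matrix m n (RatFunc ℂ)) : Prop :=
  ∀ z : ℂ, z ≠ 0 → IsRegularAt P z → IsRegularAt P (conj z)⁻¹ →
    S z = evalAt P z * (evalAt P (conj z)⁻¹)ᴴ

variable {S : ℂ → Matrix m m ℂ} {P : Matrix m n (RatFunc ℂ)}

@[simp]
lemma evalAt_apply (z : ℂ) (i : m) (j : n) : evalAt P z i j = (P i j).eval (RingHom.id ℂ) z := rfl

lemma continuousAt_evalAt {z₀ : ℂ} (h : IsRegularAt P z₀) : ContinuousAt (evalAt P) z₀ :=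
  continuousAt_pi.2 fun i => continuousAt_pi.2 fun j => (P i j).continuousAt_eval (h i j)

lemma eventually_isRegularAt [Finite m] [Finite n] (P : Matrix m n (RatFunc ℂ)) (z₀ : ℂ) :
    ∀ᶠ z in 𝓝[≠] z₀, IsRegularAt P z :=
  eventually_all.2 fun i => eventually_all.2 fun j => (P i j).eventually_denom_eval_ne_zero z₀

lemma IsFactorization.exists_leftInverse [Fintype m] [Fintype n] [DecidableEq n]
    (hfac : IsFactorization S P) {w₀ : ℂ} (hreg : IsRegularAt P w₀)
    (hrank : (evalAt P w₀).rank = Fintype.card n) :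
    ∃ B : ℂ → Matrix n m ℂ, ContinuousAt B w₀ ∧
      ∀ᶠ z in 𝓝[≠] w₀, IsRegularAt P (conj z)⁻¹ → (evalAt P (conj z)⁻¹)ᴴ = B z * S z := by
  obtain ⟨B, hB, hBP⟩ := exists_continuousAt_leftInverse (continuousAt_evalAt hreg) hrank
  have hne : ∀ᶠ z in 𝓝[≠] w₀, z ≠ 0 := by
    rcases eq_or_ne w₀ 0 with rfl | hw₀
    · exact self_mem_nhdsWithin
    · exact nhdsWithin_le_nhds (eventually_ne_nhds hw₀)
  refine ⟨B, hB, ?_⟩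
  filter_upwards [hne, eventually_isRegularAt P w₀, nhdsWithin_le_nhds hBP]
    with z hz hPz hBz hPz'
  rw [hfac z hz hPz hPz', ← Matrix.mul_assoc, hBz, Matrix.one_mul]

lemma IsFactorization.denom_eval_ne_zero_of_norm_eq_one [Fintype m] [Fintype n]
    (hfac : IsFactorization S P) {z₀ : ℂ} (hz₀ : ‖z₀‖ = 1) (hS : ContinuousAt S z₀) (i : m) (j : n) :
    (P i j).denom.eval z₀ ≠ 0 := by
  set w : ℝ → ℂ := fun θ => z₀ * Complex.exp (θ * Complex.I)
  have hw : Tendsto w (𝓝[≠] 0) (𝓝[≠] z₀) := by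
    have hderiv : HasDerivAt w (z₀ * (Complex.exp ((0 : ℝ) * Complex.I) * (1 * Complex.I))) 0 :=
      ((hasDerivAt_id (0 : ℝ)).ofReal_comp.mul_const Complex.I).cexp.const_mul z₀
    simpa [w] using hderiv.tendsto_nhdsNE (by simp [hz₀, ← norm_ne_zero_iff])
  have hw_inv_conj : ∀ θ, (conj (w θ))⁻¹ = w θ := fun θ => by
    rw [← Complex.inv_eq_conj (by simp [w, hz₀]), inv_inv]
  have hbound : ∀ᶠ θ in 𝓝[≠] 0,
      ‖(P i j).eval (RingHom.id ℂ) (w θ)‖ ≤ ‖S (w θ) i i‖ + 1 := by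
    filter_upwards [hw.eventually (eventually_isRegularAt P z₀)] with θ hθ
    have hSw : S (w θ) = evalAt P (w θ) * (evalAt P (w θ))ᴴ := by
      simpa [hw_inv_conj] using hfac (w θ) (by simp [w, ← norm_ne_zero_iff, hz₀]) hθ
        (by rwa [hw_inv_conj])
    have hsq := hSw ▸ norm_sq_le_norm_mul_conjTranspose_apply_self (evalAt P (w θ)) i j
    rw [evalAt_apply] at hsq
    nlinarith [norm_nonneg ((P i j).eval (RingHom.id ℂ) (w θ))]
  have hSw : Tendsto (fun θ => ‖S (w θ) i i‖ + 1) (𝓝[≠] 0) (𝓝 (‖S z₀ i i‖ + 1)) :=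
    ((((hS.tendsto.comp (hw.mono_right nhdsWithin_le_nhds)).apply_nhds i).apply_nhds i).norm).add
      tendsto_const_nhds
  exact (P i j).denom_eval_ne_zero_of_isBoundedUnder hw (hSw.isBoundedUnder_le.mono_le hbound)

lemma IsFactorization.isRegularAt_inv_conj [Fintype m] [Fintype n] [DecidableEq n]
    (hfac : IsFactorization S P) {w₀ : ℂ} (hw₀ : w₀ ≠ 0) (hreg : IsRegularAt P w₀)
    (hrank : (evalAt P w₀).rank = Fintype.card n) (hS : ContinuousAt S w₀) :
    IsRegularAt P (conj w₀)⁻¹ := by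
  obtain ⟨B, hB, hBS⟩ := hfac.exists_leftInverse hreg hrank
  have hreflect := Complex.tendsto_inv_conj_nhdsNE hw₀
  have hBS_cont : ContinuousAt (fun z => B z * S z) w₀ := by fun_prop
  intro i j
  have hlim : Tendsto (fun z => ‖(B z * S z) j i‖) (𝓝[≠] w₀) (𝓝 ‖(B w₀ * S w₀) j i‖) :=
    (((hBS_cont.tendsto.mono_left nhdsWithin_le_nhds).apply_nhds j).apply_nhds i).norm
  refine (P i j).denom_eval_ne_zero_of_isBoundedUnder hreflect
    (hlim.isBoundedUnder_le.mono_le ?_)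
  filter_upwards [hreflect.eventually (eventually_isRegularAt P _), hBS] with z hz hBSz
  simp [← hBSz hz]

lemma IsFactorization.natDegree_num_le [Fintype m] [Fintype n] [DecidableEq n]
    (hfac : IsFactorization S P) (hden : ∀ i j, (P i j).denom = 1)
    (hrank : (evalAt P 0).rank = Fintype.card n) {N : ℕ}
    (hS : ∀ v i, (fun z => S z v i) =O[𝓝[≠] 0] fun z => z⁻¹ ^ N) (i : m) (j : n) :
    (P i j).num.natDegree ≤ N := by
  have hreg : ∀ z, IsRegularAt P z := fun z i j => by simp [hden]
  obtain ⟨B, hB, hBS⟩ := hfac.exists_leftInverse (hreg 0) hrank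
  have hBS_O : (fun z => (B z * S z) j i) =O[𝓝[≠] 0] fun z => z⁻¹ ^ N := by
    simp only [Matrix.mul_apply]
    refine IsBigO.fun_sum fun v _ => ?_
    simpa using ((((hB.tendsto.mono_left nhdsWithin_le_nhds).apply_nhds j).apply_nhds v).isBigO_one
      ℂ).mul (hS v i)
  have hnum : (fun z => (P i j).num.eval (conj z)⁻¹) =O[𝓝[≠] 0] fun z => z⁻¹ ^ N := by
    refine IsBigO.of_norm_left (hBS_O.norm_left.congr' ?_ EventuallyEq.rfl)
    filter_upwards [hBS] with z hBSz
    simp [← hBSz (hreg _), RatFunc.eval, hden]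
  have hcomp := (hnum.comp_tendsto Complex.tendsto_inv_conj_cobounded).trans
    (isBigO_of_le (g := fun z : ℂ => z ^ N) _ fun z => by simp)
  simp only [Function.comp_def, map_inv₀, Complex.conj_conj, inv_inv] at hcomp
  exact natDegree_le_of_isBigO_cobounded hcomp

lemma IsFactorization.isRegularAt [Fintype m] [Fintype n] [DecidableEq n]
    (hfac : IsFactorization S P) (hS : ∀ z, z ≠ 0 → ContinuousAt S z)
    (hreg : ∀ z, ‖z‖ < 1 → IsRegularAt P z)
    (hrank : ∀ z, ‖z‖ < 1 → (evalAt P z).rank = Fintype.card n) (z₀ : ℂ) : IsRegularAt P z₀ := by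
  rcases lt_trichotomy ‖z₀‖ 1 with h | h | h
  · exact hreg z₀ h
  · exact hfac.denom_eval_ne_zero_of_norm_eq_one h (hS z₀ (ne_zero_of_norm_ne_zero (by simp [h])))
  · have hz₀ : (conj z₀)⁻¹ ≠ 0 := by simpa using ne_zero_of_norm_ne_zero (by linarith)
    have hw₀ : ‖(conj z₀)⁻¹‖ < 1 := by simpa using inv_lt_one_of_one_lt₀ h
    simpa using hfac.isRegularAt_inv_conj hz₀ (hreg _ hw₀) (hrank _ hw₀) (hS _ hz₀)

end Matrix

theorem stmt15_general {m k N : ℕ} (Cf : ℤ → Matrix (Fin m) (Fin m) ℂ)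
    (S : ℂ → Matrix (Fin m) (Fin m) ℂ)
    (hS : ∀ z : ℂ, z ≠ 0 → S z = ∑ n ∈ Finset.Icc (-(N : ℤ)) (N : ℤ), z ^ n • Cf n)
    (P : Matrix (Fin m) (Fin k) (RatFunc ℂ))
    (hanal : ∀ i j, ∀ z : ℂ, ‖z‖ < 1 → Polynomial.eval z (P i j).denom ≠ 0)
    (hfull : ∀ z : ℂ, ‖z‖ < 1 →
      (Matrix.of fun i j => (P i j).eval (RingHom.id ℂ) z).rank = k)
    (hfac : ∀ z : ℂ, z ≠ 0 →
      (∀ i j, Polynomial.eval z (P i j).denom ≠ 0) →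
      (∀ i j, Polynomial.eval ((starRingEnd ℂ) z)⁻¹ (P i j).denom ≠ 0) →
      S z = (Matrix.of fun i j => (P i j).eval (RingHom.id ℂ) z) *
        (Matrix.of fun i j => (P i j).eval (RingHom.id ℂ) ((starRingEnd ℂ) z)⁻¹)ᴴ) :
    ∀ i j, ∃ p : Polynomial ℂ, p.natDegree ≤ N ∧
      P i j = algebraMap (Polynomial ℂ) (RatFunc ℂ) p := by
  have hSP : IsFactorization S P := hfac
  have hrank : ∀ z : ℂ, ‖z‖ < 1 → (evalAt P z).rank = Fintype.card (Fin k) := fun z hz => by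
    rw [Fintype.card_fin]
    exact hfull z hz
  have hreg : ∀ z, IsRegularAt P z :=
    hSP.isRegularAt (fun _ => continuousAt_of_eq_laurent hS) (fun z hz i j => hanal i j z hz) hrank
  have hden : ∀ i j, (P i j).denom = 1 := fun i j =>
    (P i j).denom_eq_one_of_forall_eval_ne_zero fun z => hreg z i j
  have hS_O : ∀ v i, (fun z => S z v i) =O[𝓝[≠] 0] fun z => z⁻¹ ^ N := fun v i =>
    (isBigO_laurent_nhdsNE_zero (fun n => Cf n v i) N).congr'
      (eventually_nhdsWithin_of_forall fun z hz => by simp [hS z hz, Matrix.sum_apply]) .rfl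
  intro i j
  exact ⟨(P i j).num, hSP.natDegree_num_le hden (hrank 0 (by simp)) hS_O i j,
    (P i j).eq_algebraMap_num_of_denom_eq_one (hden i j)⟩

/-- If the Laurent matrix polynomial `S` (of order `N`, nonnegative definite of rank `k`
a.e. on the circle) factors as `S = S⁺ (S⁺)*` with `S⁺` an `m × k` rational matrix function
analytic and of full rank `k` in the open unit disk, then `S⁺` is a matrix polynomial of
degree at most `N`. -/
theorem stmt15 {m k N : ℕ} (Cf : ℤ → Matrix (Fin m) (Fin m) ℂ)
    (S : ℂ → Matrix (Fin m) (Fin m) ℂ)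
    (hS : ∀ z : ℂ, z ≠ 0 → S z = ∑ n ∈ Finset.Icc (-(N : ℤ)) (N : ℤ), z ^ n • Cf n)
    (hpos : ∀ᵐ θ : ℝ ∂volume, (S (Complex.exp (θ * Complex.I))).PosSemidef)
    (hrank : ∀ᵐ θ : ℝ ∂volume, (S (Complex.exp (θ * Complex.I))).rank = k)
    (P : Matrix (Fin m) (Fin k) (RatFunc ℂ))
    (hanal : ∀ i j, ∀ z : ℂ, ‖z‖ < 1 → Polynomial.eval z (P i j).denom ≠ 0)
    (hfull : ∀ z : ℂ, ‖z‖ < 1 →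
      (Matrix.of fun i j => (P i j).eval (RingHom.id ℂ) z).rank = k)
    (hfac : ∀ z : ℂ, z ≠ 0 →
      (∀ i j, Polynomial.eval z (P i j).denom ≠ 0) →
      (∀ i j, Polynomial.eval ((starRingEnd ℂ) z)⁻¹ (P i j).denom ≠ 0) →
      S z = (Matrix.of fun i j => (P i j).eval (RingHom.id ℂ) z) *
        (Matrix.of fun i j => (P i j).eval (RingHom.id ℂ) ((starRingEnd ℂ) z)⁻¹)ᴴ) :
    ∀ i j, ∃ p : Polynomial ℂ, p.natDegree ≤ N ∧
      P i j = algebraMap (Polynomial ℂ) (RatFunc ℂ) p :=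
  stmt15_general Cf S hS P hanal hfull hfac
end
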